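/- arXiv:2210.00370 — 4 statements merged into one kernel-verified Lean document; each statement's English description precedes it below -/
import Mathlib

section
/- For all positive integers d and r, the complex linear span of the Choi matrices of CPTP maps φ : M_d(ℂ) → M_r(ℂ) is exactly S(d,r). In particular, S(d,r) contains the identity matrix and is closed under conjugate transpose, so it is an operator system inside M_d(M_r(ℂ)). -/
open scoped Kronecker ComplexOrder Matrix

noncomputable section

/-- Apply a map `φ` between matrix algebras blockwise to a block matrix. -/
def mapBlocks {m A B : Type*} (φ : Matrix A A ℂ → Matrix B B ℂ)
    (M : Matrix (m × A) (m × A) ℂ) : Matrix (m × B) (m × B) ℂ :=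
  Matrix.of fun p q => φ (Matrix.of fun a b => M (p.1, a) (q.1, b)) p.2 q.2

/-- Complete positivity: every blockwise application preserves positive semidefiniteness. -/
def IsCP {A B : Type*} [Fintype A] [Fintype B] (φ : Matrix A A ℂ → Matrix B B ℂ) : Prop :=
  ∀ (n : ℕ) (M : Matrix (Fin n × A) (Fin n × A) ℂ), M.PosSemidef → (mapBlocks φ M).PosSemidef

/-- CPTP: completely positive and trace preserving. -/
def IsCPTP {A B : Type*} [Fintype A] [Fintype B] (φ : Matrix A A ℂ →ₗ[ℂ] Matrix B B ℂ) : Prop :=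
  IsCP ⇑φ ∧ ∀ X, (φ X).trace = X.trace

/-- The Choi matrix of a linear map, `C_φ = Σ_{ij} E_{ij} ⊗ φ(E_{ij})`. -/
def choi {d r : ℕ} (φ : Matrix (Fin d) (Fin d) ℂ →ₗ[ℂ] Matrix (Fin r) (Fin r) ℂ) :
    Matrix (Fin d × Fin r) (Fin d × Fin r) ℂ :=
  Matrix.of fun p q => φ (Matrix.single p.1 q.1 1) p.2 q.2

/-- The trace of the `(i,j)` block of a block matrix. -/
def btr {d r : ℕ} (C : Matrix (Fin d × Fin r) (Fin d × Fin r) ℂ) (i j : Fin d) : ℂ :=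
  ∑ k : Fin r, C (i, k) (j, k)

lemma btr_add {d r : ℕ} (C D : Matrix (Fin d × Fin r) (Fin d × Fin r) ℂ) (i j : Fin d) :
    btr (C + D) i j = btr C i j + btr D i j := by
  simp [btr, Finset.sum_add_distrib]

lemma btr_smul {d r : ℕ} (c : ℂ) (C : Matrix (Fin d × Fin r) (Fin d × Fin r) ℂ) (i j : Fin d) :
    btr (c • C) i j = c * btr C i j := by
  simp [btr, Finset.mul_sum]

/-- The operator system `S(d,r)`: block matrices whose diagonal blocks all have
the same trace and whose off-diagonal blocks have trace zero. -/
def Sset (d r : ℕ) : Set (Matrix (Fin d × Fin r) (Fin d × Fin r) ℂ) :=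
  {C | (∀ i j : Fin d, btr C i i = btr C j j) ∧ ∀ i j : Fin d, i ≠ j → btr C i j = 0}

/-- `S(d,r)` as a subspace. -/
def Ssub (d r : ℕ) : Submodule ℂ (Matrix (Fin d × Fin r) (Fin d × Fin r) ℂ) where
  carrier := Sset d r
  add_mem' := by
    rintro C D ⟨hC1, hC2⟩ ⟨hD1, hD2⟩
    refine ⟨fun i j => ?_, fun i j hij => ?_⟩
    · rw [btr_add, btr_add, hC1 i j, hD1 i j]
    · rw [btr_add, hC2 i j hij, hD2 i j hij, add_zero]
  zero_mem' := by
    refine ⟨fun i j => ?_, fun i j _ => ?_⟩ <;> simp [btr]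
  smul_mem' := by
    rintro c C ⟨hC1, hC2⟩
    refine ⟨fun i j => ?_, fun i j hij => ?_⟩
    · rw [btr_smul, btr_smul, hC1 i j]
    · rw [btr_smul, hC2 i j hij, mul_zero]

/-- The partial trace over the second factor. -/
def ptrace {d r : ℕ} (C : Matrix (Fin d × Fin r) (Fin d × Fin r) ℂ) : Matrix (Fin d) (Fin d) ℂ :=
  Matrix.of fun i j => btr C i j

/-! The Choi matrix of a trace-preserving map has partial trace `1`, hence lies in `S(d,r)`.
Conversely, a positive semidefinite `M` with partial trace `1` is the Choi matrix of the
trace-preserving map `X ↦ Σᵢⱼ Xᵢⱼ Mᵢⱼ` (`Mᵢⱼ` the blocks of `M`), which is completely positive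
because its blockwise action is a compression of the Kronecker product `N ⊗ M` of positive
matrices. A self-adjoint `H ∈ S(d,r)` becomes positive after adding a multiple of `1`, and a
positive element of `S(d,r)` with nonzero block trace is a multiple of such an `M`. Real and
imaginary parts reduce an arbitrary element of `S(d,r)` to the self-adjoint case. -/

open Matrix

theorem Matrix.PosSemidef.sum_sum_apply {R ι κ α : Type*} [CommRing R] [PartialOrder R]
    [StarRing R] [StarOrderedRing R] [Fintype ι] [Fintype κ] [Fintype α] [DecidableEq ι]
    {K : Matrix ι ι R} (hK : K.PosSemidef) (f : κ → α → ι) :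
    (of fun x y => ∑ a, ∑ b, K (f x a) (f y b)).PosSemidef := by
  let V : Matrix ι κ R := of fun i x => ∑ a, if f x a = i then 1 else 0
  suffices (of fun x y => ∑ a, ∑ b, K (f x a) (f y b)) = Vᴴ * K * V from
    this ▸ hK.conjTranspose_mul_mul_same V
  refine Matrix.ext fun x y => ?_
  simp only [V, mul_apply, conjTranspose_apply, of_apply, star_sum, Finset.sum_mul, Finset.mul_sum,
    apply_ite star, star_one, star_zero, ite_mul, mul_ite, one_mul, zero_mul, mul_one, mul_zero]
  conv_rhs => rw [Finset.sum_comm]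
  simp only [Finset.sum_ite_eq, Finset.mem_univ, if_true]
  conv_rhs => enter [2, b]; rw [Finset.sum_comm]
  simp only [Finset.sum_ite_eq, Finset.mem_univ, if_true]
  exact Finset.sum_comm

open scoped MatrixOrder Matrix.Norms.L2Operator in
theorem Matrix.IsHermitian.exists_posSemidef_add_smul_one {n : Type*} [Fintype n]
    [DecidableEq n] {H : Matrix n n ℂ} (hH : H.IsHermitian) :
    ∃ c : ℝ, (H + (c : ℂ) • 1).PosSemidef := by
  refine ⟨‖H‖, ?_⟩
  have := IsSelfAdjoint.neg_algebraMap_norm_le_self (a := H) hH.isSelfAdjoint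
  rwa [le_iff, sub_neg_eq_add, Algebra.algebraMap_eq_smul_one, ← Complex.coe_smul] at this

section

variable {d r : ℕ}

@[simp]
lemma ptrace_apply (C : Matrix (Fin d × Fin r) (Fin d × Fin r) ℂ) (i j : Fin d) :
    ptrace C i j = btr C i j :=
  rfl

lemma ptrace_smul (c : ℂ) (C : Matrix (Fin d × Fin r) (Fin d × Fin r) ℂ) :
    ptrace (c • C) = c • ptrace C := by
  ext i j
  simp [btr_smul]

lemma ptrace_one : ptrace (1 : Matrix (Fin d × Fin r) (Fin d × Fin r) ℂ) = (r : ℂ) • 1 := by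
  ext i j
  by_cases h : i = j <;> simp [btr, one_apply, h]

lemma mem_Sset_of_ptrace_eq_smul_one {C : Matrix (Fin d × Fin r) (Fin d × Fin r) ℂ} {t : ℂ}
    (h : ptrace C = t • 1) : C ∈ Sset d r := by
  have hdiag (i : Fin d) : btr C i i = t := by simpa using congrFun₂ h i i
  exact ⟨fun i j => by rw [hdiag, hdiag], fun i j hij => by simpa [hij] using congrFun₂ h i j⟩

lemma ptrace_eq_smul_one_of_mem_Sset {C : Matrix (Fin d × Fin r) (Fin d × Fin r) ℂ}
    (hC : C ∈ Sset d r) (i₀ : Fin d) : ptrace C = btr C i₀ i₀ • 1 := by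
  ext i j
  by_cases h : i = j
  · simp [h, hC.1 j i₀]
  · simp [h, hC.2 i j h]

lemma one_mem_Sset : (1 : Matrix (Fin d × Fin r) (Fin d × Fin r) ℂ) ∈ Sset d r :=
  mem_Sset_of_ptrace_eq_smul_one ptrace_one

lemma conjTranspose_mem_Sset {C : Matrix (Fin d × Fin r) (Fin d × Fin r) ℂ}
    (hC : C ∈ Sset d r) : Cᴴ ∈ Sset d r := by
  have btr_conjTranspose (i j : Fin d) : btr Cᴴ i j = star (btr C j i) := by
    simp [btr, star_sum]
  refine ⟨fun i j => ?_, fun i j hij => ?_⟩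
  · rw [btr_conjTranspose, btr_conjTranspose, hC.1 i j]
  · rw [btr_conjTranspose, hC.2 j i (Ne.symm hij), star_zero]

lemma btr_choi (φ : Matrix (Fin d) (Fin d) ℂ →ₗ[ℂ] Matrix (Fin r) (Fin r) ℂ) (i j : Fin d) :
    btr (choi φ) i j = (φ (single i j 1)).trace :=
  rfl

lemma ptrace_choi {φ : Matrix (Fin d) (Fin d) ℂ →ₗ[ℂ] Matrix (Fin r) (Fin r) ℂ}
    (hφ : ∀ X, (φ X).trace = X.trace) : ptrace (choi φ) = 1 := by
  ext i j
  rw [ptrace_apply, btr_choi, hφ, one_apply]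
  split_ifs with h
  · rw [h, trace_single_eq_same]
  · exact trace_single_eq_of_ne _ _ _ h

lemma choi_mem_Sset {φ : Matrix (Fin d) (Fin d) ℂ →ₗ[ℂ] Matrix (Fin r) (Fin r) ℂ}
    (hφ : IsCPTP φ) : choi φ ∈ Sset d r :=
  mem_Sset_of_ptrace_eq_smul_one (t := 1) (by rw [ptrace_choi hφ.2, one_smul])

/-- The inverse of the Choi–Jamiołkowski isomorphism `φ ↦ choi φ`. -/
def ofChoi (M : Matrix (Fin d × Fin r) (Fin d × Fin r) ℂ) :
    Matrix (Fin d) (Fin d) ℂ →ₗ[ℂ] Matrix (Fin r) (Fin r) ℂ where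
  toFun X := of fun p q => ∑ i, ∑ j, X i j * M (i, p) (j, q)
  map_add' X Y := by
    ext p q
    simp [add_mul, Finset.sum_add_distrib]
  map_smul' c X := by
    ext p q
    simp [Finset.mul_sum, mul_assoc]

lemma ofChoi_apply (M : Matrix (Fin d × Fin r) (Fin d × Fin r) ℂ)
    (X : Matrix (Fin d) (Fin d) ℂ) (p q : Fin r) :
    ofChoi M X p q = ∑ i, ∑ j, X i j * M (i, p) (j, q) :=
  rfl

lemma choi_ofChoi (M : Matrix (Fin d × Fin r) (Fin d × Fin r) ℂ) : choi (ofChoi M) = M := by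
  ext ⟨i, p⟩ ⟨j, q⟩
  simp [choi, ofChoi_apply, single_apply, ite_and]

lemma trace_ofChoi {M : Matrix (Fin d × Fin r) (Fin d × Fin r) ℂ} (hM : ptrace M = 1)
    (X : Matrix (Fin d) (Fin d) ℂ) : (ofChoi M X).trace = X.trace := by
  calc (ofChoi M X).trace = ∑ i, ∑ j, X i j * ptrace M i j := by
        simp only [trace, diag, ofChoi_apply, ptrace_apply, btr, Finset.mul_sum]
        rw [Finset.sum_comm]
        refine Finset.sum_congr rfl fun i _ => Finset.sum_comm
    _ = X.trace := by simp [hM, one_apply, trace, -ptrace_apply]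

lemma isCP_ofChoi {M : Matrix (Fin d × Fin r) (Fin d × Fin r) ℂ} (hM : M.PosSemidef) :
    IsCP (ofChoi M) := by
  intro n N hN
  have hblocks : mapBlocks (ofChoi M) N =
      of fun x y => ∑ i, ∑ j, (N ⊗ₖ M) ((x.1, i), (i, x.2)) ((y.1, j), (j, y.2)) := by
    ext x y
    simp [mapBlocks, ofChoi_apply, kroneckerMap_apply]
  rw [hblocks]
  exact (hN.kronecker hM).sum_sum_apply
    (fun x i => ((x.1, i), (i, x.2)) : Fin n × Fin r → Fin d → _)

lemma isCPTP_ofChoi {M : Matrix (Fin d × Fin r) (Fin d × Fin r) ℂ} (hM : M.PosSemidef)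
    (hM₁ : ptrace M = 1) : IsCPTP (ofChoi M) :=
  ⟨isCP_ofChoi hM, trace_ofChoi hM₁⟩

lemma btr_self_nonneg {M : Matrix (Fin d × Fin r) (Fin d × Fin r) ℂ} (hM : M.PosSemidef)
    (i : Fin d) : 0 ≤ btr M i i :=
  Finset.sum_nonneg fun _ _ => hM.diag_nonneg

def choiCPTP (d r : ℕ) : Set (Matrix (Fin d × Fin r) (Fin d × Fin r) ℂ) :=
  {C | ∃ φ : Matrix (Fin d) (Fin d) ℂ →ₗ[ℂ] Matrix (Fin r) (Fin r) ℂ, IsCPTP φ ∧ C = choi φ}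

lemma mem_span_choiCPTP_of_posSemidef {M : Matrix (Fin d × Fin r) (Fin d × Fin r) ℂ}
    (hM : M.PosSemidef) (hS : M ∈ Sset d r) {i₀ : Fin d} (hi₀ : btr M i₀ i₀ ≠ 0) :
    M ∈ Submodule.span ℂ (choiCPTP d r) := by
  set s := btr M i₀ i₀
  have hs : 0 ≤ s⁻¹ := inv_nonneg.mpr (btr_self_nonneg hM i₀)
  have hnormalized : ptrace (s⁻¹ • M) = 1 := by
    rw [ptrace_smul, ptrace_eq_smul_one_of_mem_Sset hS i₀, smul_smul, inv_mul_cancel₀ hi₀,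
      one_smul]
  have hmem : s⁻¹ • M ∈ choiCPTP d r :=
    ⟨_, isCPTP_ofChoi (hM.smul hs) hnormalized, (choi_ofChoi _).symm⟩
  rw [← smul_inv_smul₀ hi₀ M]
  exact Submodule.smul_mem _ _ (Submodule.subset_span hmem)

lemma btr_one (i : Fin d) : btr (1 : Matrix (Fin d × Fin r) (Fin d × Fin r) ℂ) i i = r := by
  simp [← ptrace_apply, ptrace_one]

lemma one_mem_span_choiCPTP (hd : 0 < d) (hr : 0 < r) :
    (1 : Matrix (Fin d × Fin r) (Fin d × Fin r) ℂ) ∈ Submodule.span ℂ (choiCPTP d r) :=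
  mem_span_choiCPTP_of_posSemidef PosSemidef.one one_mem_Sset (i₀ := ⟨0, hd⟩)
    (by simp [btr_one, hr.ne'])

lemma mem_span_choiCPTP_of_isSelfAdjoint (hd : 0 < d) (hr : 0 < r)
    {H : Matrix (Fin d × Fin r) (Fin d × Fin r) ℂ} (hH : IsSelfAdjoint H) (hS : H ∈ Sset d r) :
    H ∈ Submodule.span ℂ (choiCPTP d r) := by
  obtain ⟨c, hc⟩ := hH.isHermitian.exists_posSemidef_add_smul_one
  -- the summand `1` makes the block traces of `P` at least `r`, hence nonzero
  let P := 1 + (H + (c : ℂ) • 1)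
  have hP : P ∈ Ssub d r :=
    add_mem one_mem_Sset (add_mem hS (Submodule.smul_mem _ _ one_mem_Sset))
  have hP₀ : btr P ⟨0, hd⟩ ⟨0, hd⟩ ≠ 0 := by
    rw [btr_add, btr_one]
    exact (add_pos_of_pos_of_nonneg (by exact_mod_cast hr) (btr_self_nonneg hc _)).ne'
  have hPspan := mem_span_choiCPTP_of_posSemidef (PosSemidef.one.add hc) hP hP₀
  have hHP : H = P - (1 + c : ℂ) • 1 := by
    simp only [P]
    module
  rw [hHP]
  exact sub_mem hPspan (Submodule.smul_mem _ _ (one_mem_span_choiCPTP hd hr))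

lemma mem_span_choiCPTP_of_mem_Sset (hd : 0 < d) (hr : 0 < r)
    {C : Matrix (Fin d × Fin r) (Fin d × Fin r) ℂ} (hC : C ∈ Sset d r) :
    C ∈ Submodule.span ℂ (choiCPTP d r) := by
  have hstar : star C ∈ Ssub d r := conjTranspose_mem_Sset hC
  have hre : (realPart C : Matrix _ _ ℂ) ∈ Ssub d r := by
    rw [realPart_apply_coe]
    exact Submodule.smul_of_tower_mem _ _ (add_mem hC hstar)
  have him : (imaginaryPart C : Matrix _ _ ℂ) ∈ Ssub d r := by
    rw [imaginaryPart_apply_coe]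
    exact Submodule.smul_mem _ _ (Submodule.smul_of_tower_mem _ _ (sub_mem hC hstar))
  rw [← realPart_add_I_smul_imaginaryPart C]
  exact add_mem (mem_span_choiCPTP_of_isSelfAdjoint hd hr (realPart C).2 hre) <|
    Submodule.smul_mem _ _ (mem_span_choiCPTP_of_isSelfAdjoint hd hr (imaginaryPart C).2 him)

end

/-- the span of Choi matrices of CPTP maps `M_d → M_r` is exactly `S(d,r)`,
and `S(d,r)` contains the identity and is closed under conjugate transpose
(so it is an operator system in `M_d(M_r(ℂ))`). -/
theorem span_choi_CPTP_eq_S (d r : ℕ) (hd : 0 < d) (hr : 0 < r) :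
    (Submodule.span ℂ {C : Matrix (Fin d × Fin r) (Fin d × Fin r) ℂ |
        ∃ φ : Matrix (Fin d) (Fin d) ℂ →ₗ[ℂ] Matrix (Fin r) (Fin r) ℂ, IsCPTP φ ∧ C = choi φ} :
      Set (Matrix (Fin d × Fin r) (Fin d × Fin r) ℂ)) = Sset d r ∧
    (1 : Matrix (Fin d × Fin r) (Fin d × Fin r) ℂ) ∈ Sset d r ∧
    ∀ C ∈ Sset d r, Cᴴ ∈ Sset d r := by
  refine ⟨?_, one_mem_Sset, fun C hC => conjTranspose_mem_Sset hC⟩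
  suffices Submodule.span ℂ (choiCPTP d r) = Ssub d r from congrArg SetLike.coe this
  refine le_antisymm (Submodule.span_le.mpr ?_) fun C => mem_span_choiCPTP_of_mem_Sset hd hr
  rintro _ ⟨φ, hφ, rfl⟩
  exact choi_mem_Sset hφ

end
end

section
/- Let d₁,r₁,d₂,r₂ be positive integers and let Γ̃ : S(d₁,r₁) → M_{d₂}(M_{r₂}(ℂ)) be a linear map which is CPTP-preserving: whenever C ∈ S(d₁,r₁) is positive semidefinite with Tr_{r₁}(C) = I_{d₁}, then Γ̃(C) is positive semidefinite with Tr_{r₂}(Γ̃(C)) = I_{d₂}. Then the following are equivalent: (i) for all positive integers d₃,r₃, the unique linear map on span{C₁ ⊗ C₂ : C₁ ∈ S(d₁,r₁), C₂ ∈ S(d₃,r₃)} ⊆ M_{d₁}(M_{r₁}(ℂ)) ⊗ M_{d₃}(M_{r₃}(ℂ)) determined by C₁ ⊗ C₂ ↦ Γ̃(C₁) ⊗ C₂ sends every positive semidefinite matrix lying in this span to a positive semidefinite matrix; (ii) Γ̃ is completely positive, i.e., for every n ≥ 1, whenever an n×n block matrix with all blocks in S(d₁,r₁) is positive semidefinite,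 its blockwise image under Γ̃ is positive semidefinite. -/
open scoped Kronecker ComplexOrder Matrix

noncomputable section

/-!
Extend `Γ̃` to an arbitrary linear map `φ` on all of `M_{d₁}(M_{r₁})`. A linear map on the span of
`S(d₁,r₁) ⊗ S(d₃,r₃)` that sends `C₁ ⊗ C₂` to `Γ̃(C₁) ⊗ C₂` is forced to be `φ ⊗ id`; after swapping
the tensor factors this is `φ` applied to the blocks of a block matrix whose blocks all lie in
`S(d₁,r₁)`, so (ii) gives (i). Conversely `S(1,n)` is all of `M_n`, so for `d₃ = 1` the span
consists of all matrices whose blocks lie in `S(d₁,r₁)`, and (i) gives (ii).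
-/

open Matrix

section BlockMatrices

variable {m ι A B : Type*}

def block (i j : m) : Matrix (m × A) (m × A) ℂ →ₗ[ℂ] Matrix A A ℂ where
  toFun M := Matrix.of fun a b => M (i, a) (j, b)
  map_add' _ _ := rfl
  map_smul' _ _ := rfl

@[simp]
lemma block_apply (i j : m) (M : Matrix (m × A) (m × A) ℂ) (a b : A) :
    block i j M a b = M (i, a) (j, b) := rfl

lemma mapBlocks_apply (φ : Matrix A A ℂ → Matrix B B ℂ) (M : Matrix (m × A) (m × A) ℂ)
    (p q : m × B) : mapBlocks φ M p q = φ (block p.1 q.1 M) p.2 q.2 := rfl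

lemma block_kronecker (i j : m) (C : Matrix m m ℂ) (D : Matrix A A ℂ) :
    block i j (C ⊗ₖ D) = C i j • D := by
  ext a b
  simp

def mapBlocksₗ (φ : Matrix A A ℂ →ₗ[ℂ] Matrix B B ℂ) :
    Matrix (m × A) (m × A) ℂ →ₗ[ℂ] Matrix (m × B) (m × B) ℂ where
  toFun := mapBlocks φ
  map_add' M N := by ext; simp [mapBlocks_apply]
  map_smul' c M := by ext; simp [mapBlocks_apply]

lemma mapBlocks_kronecker (φ : Matrix A A ℂ →ₗ[ℂ] Matrix B B ℂ) (C : Matrix m m ℂ)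
    (D : Matrix A A ℂ) : mapBlocks φ (C ⊗ₖ D) = C ⊗ₖ φ D := by
  ext p q
  simp [mapBlocks_apply, block_kronecker]

lemma kronecker_reindex_prodComm (C : Matrix A A ℂ) (D : Matrix ι ι ℂ) :
    reindex (Equiv.prodComm A ι) (Equiv.prodComm A ι) (C ⊗ₖ D) = D ⊗ₖ C := by
  ext p q
  simp [mul_comm]

def tensorId (φ : Matrix A A ℂ →ₗ[ℂ] Matrix B B ℂ) (ι : Type*) :
    Matrix (A × ι) (A × ι) ℂ →ₗ[ℂ] Matrix (B × ι) (B × ι) ℂ :=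
  (reindexLinearEquiv ℂ ℂ (Equiv.prodComm ι B) (Equiv.prodComm ι B)).toLinearMap ∘ₗ
    mapBlocksₗ φ ∘ₗ
      (reindexLinearEquiv ℂ ℂ (Equiv.prodComm A ι) (Equiv.prodComm A ι)).toLinearMap

lemma tensorId_apply (φ : Matrix A A ℂ →ₗ[ℂ] Matrix B B ℂ) (X : Matrix (A × ι) (A × ι) ℂ) :
    tensorId φ ι X = reindex (Equiv.prodComm ι B) (Equiv.prodComm ι B)
      (mapBlocks φ (reindex (Equiv.prodComm A ι) (Equiv.prodComm A ι) X)) := rfl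

lemma tensorId_kronecker (φ : Matrix A A ℂ →ₗ[ℂ] Matrix B B ℂ) (C : Matrix A A ℂ)
    (D : Matrix ι ι ℂ) : tensorId φ ι (C ⊗ₖ D) = φ C ⊗ₖ D := by
  rw [tensorId_apply, kronecker_reindex_prodComm, mapBlocks_kronecker, kronecker_reindex_prodComm]

end BlockMatrices

section KroneckerSpan

variable {ι A B : Type*}

def kroneckerSpan (S : Submodule ℂ (Matrix A A ℂ)) (T : Submodule ℂ (Matrix ι ι ℂ)) :
    Submodule ℂ (Matrix (A × ι) (A × ι) ℂ) :=
  Submodule.span ℂ {X | ∃ C₁ ∈ S, ∃ C₂ ∈ T, X = C₁ ⊗ₖ C₂}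

variable {S : Submodule ℂ (Matrix A A ℂ)} {T : Submodule ℂ (Matrix ι ι ℂ)}

lemma kroneckerSpan_mono {T' : Submodule ℂ (Matrix ι ι ℂ)} (h : T ≤ T') :
    kroneckerSpan S T ≤ kroneckerSpan S T' :=
  Submodule.span_mono fun _ ⟨C₁, h₁, C₂, h₂, hX⟩ => ⟨C₁, h₁, C₂, h h₂, hX⟩

lemma block_reindex_mem_of_mem_kroneckerSpan {X : Matrix (A × ι) (A × ι) ℂ}
    (hX : X ∈ kroneckerSpan S T) (u v : ι) :
    block u v (reindex (Equiv.prodComm A ι) (Equiv.prodComm A ι) X) ∈ S := by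
  refine (Submodule.span_le (p := S.comap (block u v ∘ₗ
    (reindexLinearEquiv ℂ ℂ (Equiv.prodComm A ι) (Equiv.prodComm A ι)).toLinearMap))).2 ?_ hX
  rintro _ ⟨C₁, h₁, C₂, -, rfl⟩
  change block u v (reindex _ _ (C₁ ⊗ₖ C₂)) ∈ S
  rw [kronecker_reindex_prodComm, block_kronecker]
  exact S.smul_mem (C₂ u v) h₁

lemma eq_sum_block_kronecker_single [Fintype ι] [DecidableEq ι] (X : Matrix (A × ι) (A × ι) ℂ) :
    X = ∑ u, ∑ v,
      block u v (reindex (Equiv.prodComm A ι) (Equiv.prodComm A ι) X) ⊗ₖ single u v 1 := by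
  ext ⟨a, u⟩ ⟨b, v⟩
  simp [Matrix.sum_apply, single_apply, ite_and]

lemma mem_kroneckerSpan_top_iff [Finite ι] {X : Matrix (A × ι) (A × ι) ℂ} :
    X ∈ kroneckerSpan S ⊤ ↔
      ∀ u v : ι, block u v (reindex (Equiv.prodComm A ι) (Equiv.prodComm A ι) X) ∈ S := by
  classical
  cases nonempty_fintype ι
  refine ⟨block_reindex_mem_of_mem_kroneckerSpan, fun h => ?_⟩
  rw [eq_sum_block_kronecker_single X]
  exact Submodule.sum_mem _ fun u _ => Submodule.sum_mem _ fun v _ =>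
    Submodule.subset_span ⟨_, h u v, _, Submodule.mem_top, rfl⟩

lemma eq_tensorId_of_kronecker (φ : Matrix A A ℂ →ₗ[ℂ] Matrix B B ℂ)
    (L : kroneckerSpan S T →ₗ[ℂ] Matrix (B × ι) (B × ι) ℂ)
    (hL : ∀ C₁ ∈ S, ∀ C₂ ∈ T, ∀ h : C₁ ⊗ₖ C₂ ∈ kroneckerSpan S T, L ⟨_, h⟩ = φ C₁ ⊗ₖ C₂) :
    L = tensorId φ ι ∘ₗ (kroneckerSpan S T).subtype := by
  refine LinearMap.ext_on Submodule.span_span_coe_preimage ?_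
  rintro ⟨_, h⟩ ⟨C₁, h₁, C₂, h₂, rfl⟩
  simp [hL C₁ h₁ C₂ h₂, tensorId_kronecker]

end KroneckerSpan

section Positivity

variable {ι A B : Type*}

def IsPositiveOn (S : Submodule ℂ (Matrix A A ℂ)) (φ : Matrix A A ℂ → Matrix B B ℂ)
    (m : Type*) : Prop :=
  ∀ M : Matrix (m × A) (m × A) ℂ, (∀ i j, block i j M ∈ S) → M.PosSemidef →
    (mapBlocks φ M).PosSemidef

variable {S : Submodule ℂ (Matrix A A ℂ)}

lemma IsPositiveOn.of_equiv {φ : Matrix A A ℂ → Matrix B B ℂ} {m m' : Type*} (e : m ≃ m')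
    (h : IsPositiveOn S φ m') : IsPositiveOn S φ m := by
  intro M hM hpsd
  rw [← posSemidef_submatrix_equiv (e.symm.prodCongr (Equiv.refl B))]
  exact h _ (fun i j => hM (e.symm i) (e.symm j))
    (hpsd.submatrix (e.symm.prodCongr (Equiv.refl A)))

lemma isPositiveOn_iff_tensorId [Finite ι] (φ : Matrix A A ℂ →ₗ[ℂ] Matrix B B ℂ) :
    IsPositiveOn S φ ι ↔ ∀ X ∈ kroneckerSpan S (⊤ : Submodule ℂ (Matrix ι ι ℂ)),
      X.PosSemidef → (tensorId φ ι X).PosSemidef := by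
  constructor
  · intro h X hX hpsd
    exact (h _ (mem_kroneckerSpan_top_iff.1 hX) (hpsd.submatrix _)).submatrix _
  · intro h M hM hpsd
    have := h (reindex (Equiv.prodComm ι A) (Equiv.prodComm ι A) M)
      (mem_kroneckerSpan_top_iff.2 hM) (hpsd.submatrix _)
    exact (posSemidef_submatrix_equiv (Equiv.prodComm B ι)).1 this

variable (Γ : S →ₗ[ℂ] Matrix B B ℂ) {φ : Matrix A A ℂ →ₗ[ℂ] Matrix B B ℂ}

lemma isPositiveOn_iff_of_extends (hφ : ∀ C : S, φ C = Γ C) (m : Type*) :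
    IsPositiveOn S φ m ↔
      ∀ (M : Matrix (m × A) (m × A) ℂ) (hM : ∀ k l, (Matrix.of fun a b => M (k, a) (l, b)) ∈ S),
        M.PosSemidef →
          (Matrix.of fun p q : m × B =>
            Γ ⟨Matrix.of fun a b => M (p.1, a) (q.1, b), hM p.1 q.1⟩ p.2 q.2).PosSemidef := by
  refine forall_congr' fun M => forall_congr' fun hM => ?_
  have : mapBlocks φ M =
      Matrix.of fun p q : m × B =>
        Γ ⟨Matrix.of fun a b => M (p.1, a) (q.1, b), hM p.1 q.1⟩ p.2 q.2 := by
    ext p q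
    exact congrFun (congrFun (hφ ⟨_, hM p.1 q.1⟩) p.2) q.2
  rw [this]

lemma forall_tensorId_posSemidef_iff_of_extends (hφ : ∀ C : S, φ C = Γ C)
    (T : Submodule ℂ (Matrix ι ι ℂ)) :
    (∀ X ∈ kroneckerSpan S T, X.PosSemidef → (tensorId φ ι X).PosSemidef) ↔
      ∀ L : kroneckerSpan S T →ₗ[ℂ] Matrix (B × ι) (B × ι) ℂ,
        (∀ (C₁ : S) (C₂ : T) (h : (C₁ : Matrix A A ℂ) ⊗ₖ (C₂ : Matrix ι ι ℂ) ∈ kroneckerSpan S T),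
          L ⟨_, h⟩ = Γ C₁ ⊗ₖ (C₂ : Matrix ι ι ℂ)) →
        ∀ X : kroneckerSpan S T, (X : Matrix (A × ι) (A × ι) ℂ).PosSemidef → (L X).PosSemidef := by
  constructor
  · intro h L hL X hX
    rw [eq_tensorId_of_kronecker φ L fun C₁ h₁ C₂ h₂ h => by rw [hL ⟨C₁, h₁⟩ ⟨C₂, h₂⟩ h, ← hφ]]
    exact h X X.2 hX
  · intro h X hX hpsd
    exact h (tensorId φ ι ∘ₗ (kroneckerSpan S T).subtype)
      (fun C₁ C₂ _ => by simp [tensorId_kronecker, hφ]) ⟨X, hX⟩ hpsd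

end Positivity

lemma Ssub_one_eq_top (r : ℕ) : Ssub 1 r = ⊤ :=
  eq_top_iff.2 fun _ _ => ⟨fun i j => by rw [Subsingleton.elim i j],
    fun i j hij => absurd (Subsingleton.elim i j) hij⟩

theorem QSC_tensor_stability_iff_completelyPositive_general (d₁ r₁ d₂ r₂ : ℕ)
    (Γ : ↥(Ssub d₁ r₁) →ₗ[ℂ] Matrix (Fin d₂ × Fin r₂) (Fin d₂ × Fin r₂) ℂ) :
    (∀ d₃ r₃ : ℕ,
      ∀ L : ↥(Submodule.span ℂ
          {X : Matrix ((Fin d₁ × Fin r₁) × (Fin d₃ × Fin r₃))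
              ((Fin d₁ × Fin r₁) × (Fin d₃ × Fin r₃)) ℂ |
            ∃ C₁ ∈ Ssub d₁ r₁, ∃ C₂ ∈ Ssub d₃ r₃, X = C₁ ⊗ₖ C₂}) →ₗ[ℂ]
          Matrix ((Fin d₂ × Fin r₂) × (Fin d₃ × Fin r₃))
            ((Fin d₂ × Fin r₂) × (Fin d₃ × Fin r₃)) ℂ,
        (∀ (C₁ : ↥(Ssub d₁ r₁)) (C₂ : ↥(Ssub d₃ r₃))
            (h : ((C₁ : Matrix (Fin d₁ × Fin r₁) (Fin d₁ × Fin r₁) ℂ) ⊗ₖ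
                  (C₂ : Matrix (Fin d₃ × Fin r₃) (Fin d₃ × Fin r₃) ℂ)) ∈
                Submodule.span ℂ
                  {X : Matrix ((Fin d₁ × Fin r₁) × (Fin d₃ × Fin r₃))
                      ((Fin d₁ × Fin r₁) × (Fin d₃ × Fin r₃)) ℂ |
                    ∃ C₁ ∈ Ssub d₁ r₁, ∃ C₂ ∈ Ssub d₃ r₃, X = C₁ ⊗ₖ C₂}),
          L ⟨_, h⟩ = (Γ C₁) ⊗ₖ (C₂ : Matrix (Fin d₃ × Fin r₃) (Fin d₃ × Fin r₃) ℂ)) →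
        ∀ X : ↥(Submodule.span ℂ
            {X : Matrix ((Fin d₁ × Fin r₁) × (Fin d₃ × Fin r₃))
                ((Fin d₁ × Fin r₁) × (Fin d₃ × Fin r₃)) ℂ |
              ∃ C₁ ∈ Ssub d₁ r₁, ∃ C₂ ∈ Ssub d₃ r₃, X = C₁ ⊗ₖ C₂}),
          (X : Matrix ((Fin d₁ × Fin r₁) × (Fin d₃ × Fin r₃))
            ((Fin d₁ × Fin r₁) × (Fin d₃ × Fin r₃)) ℂ).PosSemidef → (L X).PosSemidef)
    ↔
    (∀ (n : ℕ) (M : Matrix (Fin n × (Fin d₁ × Fin r₁)) (Fin n × (Fin d₁ × Fin r₁)) ℂ)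
        (hM : ∀ k l : Fin n,
          (Matrix.of fun a b : Fin d₁ × Fin r₁ => M (k, a) (l, b)) ∈ Ssub d₁ r₁),
      M.PosSemidef →
      (Matrix.of fun p q : Fin n × (Fin d₂ × Fin r₂) =>
        Γ ⟨Matrix.of fun a b : Fin d₁ × Fin r₁ => M (p.1, a) (q.1, b),
          hM p.1 q.1⟩ p.2 q.2).PosSemidef) := by
  obtain ⟨φ, hφ⟩ := Γ.exists_extend
  have hφΓ : ∀ C : Ssub d₁ r₁, φ C = Γ C := LinearMap.congr_fun hφ
  constructor
  · intro h n
    refine (isPositiveOn_iff_of_extends Γ hφΓ (Fin n)).1 ?_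
    have h₁ := (forall_tensorId_posSemidef_iff_of_extends Γ hφΓ (Ssub 1 n)).2 (h 1 n)
    rw [Ssub_one_eq_top] at h₁
    exact ((isPositiveOn_iff_tensorId φ).2 h₁).of_equiv (Equiv.uniqueProd (Fin n) (Fin 1)).symm
  · intro h d₃ r₃
    refine (forall_tensorId_posSemidef_iff_of_extends Γ hφΓ (Ssub d₃ r₃)).1 fun X hX => ?_
    have hpos :=
      ((isPositiveOn_iff_of_extends Γ hφΓ _).2 (h (d₃ * r₃))).of_equiv finProdFinEquiv
    exact (isPositiveOn_iff_tensorId φ).1 hpos X (kroneckerSpan_mono le_top hX)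

/-- for a CPTP-preserving linear map `Γ̃ : S(d₁,r₁) → M_{d₂}(M_{r₂})`,
the following are equivalent:
(i) for all `d₃, r₃`, any linear map on the span of `{C₁ ⊗ C₂ : C₁ ∈ S(d₁,r₁), C₂ ∈ S(d₃,r₃)}`
determined by `C₁ ⊗ C₂ ↦ Γ̃(C₁) ⊗ C₂` sends every positive semidefinite element of that
span to a positive semidefinite matrix;
(ii) `Γ̃` is completely positive on the operator system `S(d₁,r₁)`. -/
theorem QSC_tensor_stability_iff_completelyPositive (d₁ r₁ d₂ r₂ : ℕ)
    (hd₁ : 0 < d₁) (hr₁ : 0 < r₁) (hd₂ : 0 < d₂) (hr₂ : 0 < r₂)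
    (Γ : ↥(Ssub d₁ r₁) →ₗ[ℂ] Matrix (Fin d₂ × Fin r₂) (Fin d₂ × Fin r₂) ℂ)
    (hΓ : ∀ C : ↥(Ssub d₁ r₁), (C : Matrix (Fin d₁ × Fin r₁) (Fin d₁ × Fin r₁) ℂ).PosSemidef →
      ptrace (C : Matrix (Fin d₁ × Fin r₁) (Fin d₁ × Fin r₁) ℂ) = 1 →
      (Γ C).PosSemidef ∧ ptrace (Γ C) = 1) :
    (∀ d₃ r₃ : ℕ,
      ∀ L : ↥(Submodule.span ℂ
          {X : Matrix ((Fin d₁ × Fin r₁) × (Fin d₃ × Fin r₃))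
              ((Fin d₁ × Fin r₁) × (Fin d₃ × Fin r₃)) ℂ |
            ∃ C₁ ∈ Ssub d₁ r₁, ∃ C₂ ∈ Ssub d₃ r₃, X = C₁ ⊗ₖ C₂}) →ₗ[ℂ]
          Matrix ((Fin d₂ × Fin r₂) × (Fin d₃ × Fin r₃))
            ((Fin d₂ × Fin r₂) × (Fin d₃ × Fin r₃)) ℂ,
        (∀ (C₁ : ↥(Ssub d₁ r₁)) (C₂ : ↥(Ssub d₃ r₃))
            (h : ((C₁ : Matrix (Fin d₁ × Fin r₁) (Fin d₁ × Fin r₁) ℂ) ⊗ₖ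
                  (C₂ : Matrix (Fin d₃ × Fin r₃) (Fin d₃ × Fin r₃) ℂ)) ∈
                Submodule.span ℂ
                  {X : Matrix ((Fin d₁ × Fin r₁) × (Fin d₃ × Fin r₃))
                      ((Fin d₁ × Fin r₁) × (Fin d₃ × Fin r₃)) ℂ |
                    ∃ C₁ ∈ Ssub d₁ r₁, ∃ C₂ ∈ Ssub d₃ r₃, X = C₁ ⊗ₖ C₂}),
          L ⟨_, h⟩ = (Γ C₁) ⊗ₖ (C₂ : Matrix (Fin d₃ × Fin r₃) (Fin d₃ × Fin r₃) ℂ)) →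
        ∀ X : ↥(Submodule.span ℂ
            {X : Matrix ((Fin d₁ × Fin r₁) × (Fin d₃ × Fin r₃))
                ((Fin d₁ × Fin r₁) × (Fin d₃ × Fin r₃)) ℂ |
              ∃ C₁ ∈ Ssub d₁ r₁, ∃ C₂ ∈ Ssub d₃ r₃, X = C₁ ⊗ₖ C₂}),
          (X : Matrix ((Fin d₁ × Fin r₁) × (Fin d₃ × Fin r₃))
            ((Fin d₁ × Fin r₁) × (Fin d₃ × Fin r₃)) ℂ).PosSemidef → (L X).PosSemidef)
    ↔
    (∀ (n : ℕ) (M : Matrix (Fin n × (Fin d₁ × Fin r₁)) (Fin n × (Fin d₁ × Fin r₁)) ℂ)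
        (hM : ∀ k l : Fin n,
          (Matrix.of fun a b : Fin d₁ × Fin r₁ => M (k, a) (l, b)) ∈ Ssub d₁ r₁),
      M.PosSemidef →
      (Matrix.of fun p q : Fin n × (Fin d₂ × Fin r₂) =>
        Γ ⟨Matrix.of fun a b : Fin d₁ × Fin r₁ => M (p.1, a) (q.1, b),
          hM p.1 q.1⟩ p.2 q.2).PosSemidef) :=
  QSC_tensor_stability_iff_completelyPositive_general d₁ r₁ d₂ r₂ Γ
end
end

section
/- Fix a positive integer r. Define Γ̃₁, Γ̃₂ : M₂(M_r(ℂ)) → ℂ on block matrices by Γ̃₁((P_{ij})_{i,j=1,2}) = Tr(P₁₁) and Γ̃₂((P_{ij})_{i,j=1,2}) = Tr(P₂₂). Then: (a) Γ̃₁ and Γ̃₂ are completely positive; (b) Γ̃₁(C) = 1 = Γ̃₂(C) for every positive semidefinite C with Tr_r(C) = I₂; (c) Γ̃₁(C) = Γ̃₂(C) for all C ∈ S(2,r); and (d) Γ̃₁ ≠ Γ̃₂ as linear maps on M₂(M_r(ℂ)). Hence the superchannel extension of a QSC is not unique. -/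
/-! Both maps see only the traces of the diagonal blocks, which are forced to be `1` on Choi
matrices of channels and to be equal on `S(2,r)`; a matrix unit inside the second diagonal
block separates them on all of `M₂(M_r(ℂ))`. -/

open scoped Kronecker ComplexOrder Matrix

noncomputable section

def diagBlockTrace {d r : ℕ} (i : Fin d) (C : Matrix (Fin d × Fin r) (Fin d × Fin r) ℂ) :
    Matrix (Fin 1) (Fin 1) ℂ :=
  Matrix.of fun _ _ => btr C i i

lemma diagBlockTrace_eq_smul_one {d r : ℕ} (i : Fin d)
    (C : Matrix (Fin d × Fin r) (Fin d × Fin r) ℂ) : diagBlockTrace i C = btr C i i • 1 := by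
  ext a b
  simp [diagBlockTrace, Subsingleton.elim a b]

/-- Blockwise, `diagBlockTrace i` is a sum of compressions `M ↦ M.submatrix e e`, each of
which preserves positive semidefiniteness. -/
lemma isCP_diagBlockTrace {d r : ℕ} (i : Fin d) : IsCP (diagBlockTrace (r := r) i) := by
  intro n M hM
  have hsum : mapBlocks (diagBlockTrace i) M =
      ∑ k : Fin r, M.submatrix (fun p : Fin n × Fin 1 => (p.1, (i, k)))
        (fun p : Fin n × Fin 1 => (p.1, (i, k))) := by
    ext p q
    simp [mapBlocks, diagBlockTrace, btr, Matrix.sum_apply]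
  rw [hsum]
  exact Matrix.posSemidef_sum _ fun k _ => hM.submatrix _

lemma diagBlockTrace_eq_one_of_ptrace_eq_one {d r : ℕ} (i : Fin d)
    {C : Matrix (Fin d × Fin r) (Fin d × Fin r) ℂ} (hC : ptrace C = 1) :
    diagBlockTrace i C = 1 := by
  have hii : btr C i i = 1 := by
    simpa [ptrace] using congrFun (congrFun hC i) i
  rw [diagBlockTrace_eq_smul_one, hii, one_smul]

lemma diagBlockTrace_eq_of_mem_Sset {d r : ℕ} (i j : Fin d)
    {C : Matrix (Fin d × Fin r) (Fin d × Fin r) ℂ} (hC : C ∈ Sset d r) :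
    diagBlockTrace i C = diagBlockTrace j C := by
  rw [diagBlockTrace_eq_smul_one, diagBlockTrace_eq_smul_one, hC.1 i j]

lemma diagBlockTrace_single {d r : ℕ} (i j : Fin d) (k : Fin r) :
    diagBlockTrace i (Matrix.single (j, k) (j, k) 1) = if i = j then 1 else 0 := by
  rw [diagBlockTrace_eq_smul_one]
  split_ifs with hij
  · subst hij
    simp [btr, Matrix.single_apply]
  · simp [btr, Ne.symm hij]

lemma diagBlockTrace_ne {d r : ℕ} (hr : 0 < r) {i j : Fin d} (hij : i ≠ j) :
    diagBlockTrace (r := r) i ≠ diagBlockTrace j := by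
  intro h
  have := congrFun h (Matrix.single (j, ⟨0, hr⟩) (j, ⟨0, hr⟩) 1)
  rw [diagBlockTrace_single, diagBlockTrace_single, if_neg hij, if_pos rfl] at this
  exact zero_ne_one this

/-- the maps `Γ̃₁(C) = Tr(P₁₁)` and `Γ̃₂(C) = Tr(P₂₂)` on `M₂(M_r(ℂ))`
(with values in `ℂ ≅ M₁(ℂ)`) are completely positive, both send every Choi matrix of a
CPTP map to `1`, they agree on `S(2,r)`, yet they are different maps: the superchannel
extension of a QSC is not unique. -/
theorem superchannel_extension_not_unique (r : ℕ) (hr : 0 < r)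
    (Γ₁ Γ₂ : Matrix (Fin 2 × Fin r) (Fin 2 × Fin r) ℂ → Matrix (Fin 1) (Fin 1) ℂ)
    (hΓ₁ : ∀ C, Γ₁ C = Matrix.of fun _ _ => ∑ k : Fin r, C (0, k) (0, k))
    (hΓ₂ : ∀ C, Γ₂ C = Matrix.of fun _ _ => ∑ k : Fin r, C (1, k) (1, k)) :
    IsCP Γ₁ ∧ IsCP Γ₂ ∧
    (∀ C : Matrix (Fin 2 × Fin r) (Fin 2 × Fin r) ℂ,
      C.PosSemidef → ptrace C = 1 → Γ₁ C = 1 ∧ Γ₂ C = 1) ∧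
    (∀ C ∈ Sset 2 r, Γ₁ C = Γ₂ C) ∧
    Γ₁ ≠ Γ₂ := by
  obtain rfl : Γ₁ = diagBlockTrace 0 := funext hΓ₁
  obtain rfl : Γ₂ = diagBlockTrace 1 := funext hΓ₂
  refine ⟨isCP_diagBlockTrace 0, isCP_diagBlockTrace 1, ?_, ?_, diagBlockTrace_ne hr zero_ne_one⟩
  · intro C _ hC
    exact ⟨diagBlockTrace_eq_one_of_ptrace_eq_one 0 hC, diagBlockTrace_eq_one_of_ptrace_eq_one 1 hC⟩
  · intro C hC
    exact diagBlockTrace_eq_of_mem_Sset 0 1 hC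

end
end

section
/- Define ψ_a, ψ_b : M₂(ℂ) → ℂ by ψ_a(M) = M₁₁ and ψ_b(M) = M₂₂ (the diagonal entries). Then ψ_a and ψ_b are completely positive maps which agree on S(2,1) = {M ∈ M₂(ℂ) : M₁₁ = M₂₂ and M₁₂ = M₂₁ = 0}, yet the maps id_{M₄} ⊗ ψ_a and id_{M₄} ⊗ ψ_b : M₄(ℂ) ⊗ M₂(ℂ) → M₄(ℂ) disagree at a point of S(4,2): for X = I₄ ⊗ diag(1,0), which lies in S(4,2), one has (id_{M₄} ⊗ ψ_a)(X) = I₄ while (id_{M₄} ⊗ ψ_b)(X) = 0. Hence tensor products of different extensions of the same QSC can restrict to different QSCs. -/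
open scoped Kronecker ComplexOrder Matrix

noncomputable section

/-! Applied blockwise, the compression `ψ(M) = M k k` extracts a principal submatrix, so it is
completely positive. On `1 ⊗ N` it yields `1 ⊗ N k k`, and `N = diag(1,0)` has distinct diagonal
entries while `1 ⊗ N` lies in `S(d,r)` because it has block traces `δᵢⱼ · Tr N`. -/

def entryMap {A B : Type*} (k : A) (M : Matrix A A ℂ) : Matrix B B ℂ :=
  Matrix.of fun _ _ => M k k

lemma mapBlocks_entryMap {m A B : Type*} (k : A) (M : Matrix (m × A) (m × A) ℂ) :
    mapBlocks (entryMap (B := B) k) M = M.submatrix (fun p => (p.1, k)) (fun q => (q.1, k)) := by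
  ext p q
  rfl

lemma isCP_entryMap {A B : Type*} [Fintype A] [Fintype B] (k : A) :
    IsCP (entryMap (B := B) k) := fun _ M hM => by
  rw [mapBlocks_entryMap]
  exact hM.submatrix _

lemma mapBlocks_entryMap_kronecker {m A B : Type*} (k : A) (X : Matrix m m ℂ)
    (N : Matrix A A ℂ) :
    mapBlocks (entryMap (B := B) k) (X ⊗ₖ N) = X ⊗ₖ entryMap (B := B) k N := by
  ext p q
  rfl

lemma btr_kronecker {d r : ℕ} (X : Matrix (Fin d) (Fin d) ℂ) (N : Matrix (Fin r) (Fin r) ℂ)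
    (i j : Fin d) : btr (X ⊗ₖ N) i j = X i j * N.trace := by
  simp only [btr, Matrix.kroneckerMap_apply, Matrix.trace, Matrix.diag, Finset.mul_sum]

lemma one_kronecker_mem_Sset {d r : ℕ} (N : Matrix (Fin r) (Fin r) ℂ) :
    (1 : Matrix (Fin d) (Fin d) ℂ) ⊗ₖ N ∈ Sset d r := by
  refine ⟨fun i j => ?_, fun i j hij => ?_⟩
  · simp [btr_kronecker]
  · simp [btr_kronecker, hij]

/-- the completely positive maps `ψ_a(M) = M₁₁` and `ψ_b(M) = M₂₂` on
`M₂(ℂ)` (valued in `ℂ ≅ M₁(ℂ)`) agree on `S(2,1)`, but `id_{M₄} ⊗ ψ_a` and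
`id_{M₄} ⊗ ψ_b` disagree at `X = I₄ ⊗ diag(1,0) ∈ S(4,2)`: one gives `I₄`, the other
`0`. Tensor products of different extensions of the same QSC restrict to different
QSCs. -/
theorem tensor_extensions_differ
    (ψa ψb : Matrix (Fin 2) (Fin 2) ℂ → Matrix (Fin 1) (Fin 1) ℂ)
    (ha : ∀ M, ψa M = Matrix.of fun _ _ => M 0 0)
    (hb : ∀ M, ψb M = Matrix.of fun _ _ => M 1 1) :
    IsCP ψa ∧ IsCP ψb ∧
    (∀ M : Matrix (Fin 2) (Fin 2) ℂ,
      M 0 0 = M 1 1 → M 0 1 = 0 → M 1 0 = 0 → ψa M = ψb M) ∧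
    ((1 : Matrix (Fin 4) (Fin 4) ℂ) ⊗ₖ
        (Matrix.diagonal ![1, 0] : Matrix (Fin 2) (Fin 2) ℂ) ∈ Sset 4 2) ∧
    mapBlocks ψa ((1 : Matrix (Fin 4) (Fin 4) ℂ) ⊗ₖ
        (Matrix.diagonal ![1, 0] : Matrix (Fin 2) (Fin 2) ℂ)) = 1 ∧
    mapBlocks ψb ((1 : Matrix (Fin 4) (Fin 4) ℂ) ⊗ₖ
        (Matrix.diagonal ![1, 0] : Matrix (Fin 2) (Fin 2) ℂ)) = 0 := by
  obtain rfl : ψa = entryMap 0 := funext ha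
  obtain rfl : ψb = entryMap 1 := funext hb
  refine ⟨isCP_entryMap 0, isCP_entryMap 1, fun M h _ _ => ?_, one_kronecker_mem_Sset _, ?_, ?_⟩
  · simp only [entryMap, h]
  · rw [mapBlocks_entryMap_kronecker, ← Matrix.one_kronecker_one]
    congr 1
    ext i j
    rw [Subsingleton.elim i j]
    simp [entryMap]
  · rw [mapBlocks_entryMap_kronecker]
    ext
    simp [entryMap]

end
end
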